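/- arXiv:0905.3897 — 3 statements merged into one kernel-verified Lean document; each statement's English description precedes it below -/
import Mathlib

section
/- Let X be a compact topological space, let H and H' be real separable Hilbert spaces, and let L : X → B(H, H') be a family of bounded operators that is continuous in the operator norm and such that L_x is Fredholm for every x ∈ X. Then there exists a finite-dimensional linear subspace V of H' that is transverse to the family, i.e. Im(L_x) + V = H' for every x ∈ X. -/
/-!
Surjectivity is an open condition on bounded operators between Banach spaces (open mapping
theorem plus a perturbation argument). At a point `x₀`, the range of `L x₀` has a
finite-dimensional algebraic complement `V`, so `(u, v) ↦ L x₀ u + v` on `H × V` is onto; by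
openness and continuity of `L`, `L x u + v` stays onto near `x₀`, i.e. `V` is transverse to `L x`
there. Finitely many such neighbourhoods cover `X`, and the sum of their subspaces works for all
of `X`.
-/

open Topology

theorem Submodule.exists_finiteDimensional_sup_eq_top {K M : Type*} [DivisionRing K]
    [AddCommGroup M] [Module K M] (p : Submodule K M) [FiniteDimensional K (M ⧸ p)] :
    ∃ q : Submodule K M, FiniteDimensional K q ∧ p ⊔ q = ⊤ := by
  obtain ⟨q, hq⟩ := p.exists_isCompl
  exact ⟨q, (p.quotientEquivOfIsCompl q hq).finiteDimensional, hq.sup_eq_top⟩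

namespace ContinuousLinearMap

variable {𝕜 E F : Type*} [NontriviallyNormedField 𝕜]
  [NormedAddCommGroup E] [NormedSpace 𝕜 E] [NormedAddCommGroup F] [NormedSpace 𝕜 F]

theorem isOpen_setOf_surjective [CompleteSpace E] [CompleteSpace F] :
    IsOpen {T : E →L[𝕜] F | Function.Surjective T} := by
  refine Metric.isOpen_iff.2 fun T hT => ?_
  obtain ⟨g, hg⟩ := T.exists_nonlinearRightInverse_of_surjective (LinearMap.range_eq_top.2 hT)
  refine ⟨g.nnnorm⁻¹, by positivity, fun S hS => ?_⟩
  have hST : ‖S - T‖₊ < g.nnnorm⁻¹ := by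
    rw [Metric.mem_ball, dist_eq_norm] at hS
    exact_mod_cast hS
  have happrox : ApproximatesLinearOn S T Set.univ ‖S - T‖₊ :=
    ApproximatesLinearOn.approximatesLinearOn_iff_lipschitzOnWith.2
      (S - T).lipschitz.lipschitzOnWith
  have hopen : IsOpen (S.range : Set F) := by
    simpa [LinearMap.coe_range] using happrox.open_image g isOpen_univ (Or.inr hST)
  have hzero : (0 : F) ∈ interior (S.range : Set F) := by
    rw [hopen.interior_eq]
    exact zero_mem _
  exact LinearMap.range_eq_top.1 (Submodule.eq_top_of_nonempty_interior' _ ⟨0, hzero⟩)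

theorem range_coprod_subtypeL (T : E →L[𝕜] F) (V : Submodule 𝕜 F) :
    (T.coprod V.subtypeL).range = T.range ⊔ V := by
  rw [coe_coprod, LinearMap.range_coprod]
  exact congrArg _ V.range_subtype

theorem eventually_range_sup_eq_top {X : Type*} [TopologicalSpace X] [CompleteSpace E]
    [CompleteSpace F] {L : X → E →L[𝕜] F} {x₀ : X} (hL : ContinuousAt L x₀)
    (V : Submodule 𝕜 F) [CompleteSpace V] (h : (L x₀).range ⊔ V = ⊤) :
    ∀ᶠ x in 𝓝 x₀, (L x).range ⊔ V = ⊤ := by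
  set T : X → E × V →L[𝕜] F := fun x => (L x).coprod V.subtypeL
  have hT : ContinuousAt T x₀ :=
    (coprodEquivL 𝕜).continuous.continuousAt.comp (hL.prodMk continuousAt_const)
  have hsurj : Function.Surjective (T x₀) :=
    LinearMap.range_eq_top.1 ((range_coprod_subtypeL _ _).trans h)
  filter_upwards [hT.preimage_mem_nhds (isOpen_setOf_surjective.mem_nhds hsurj)] with x hx
  rw [← range_coprod_subtypeL]
  exact LinearMap.range_eq_top.2 hx

end ContinuousLinearMap

theorem exists_finiteDimensional_transverse_subspace_general
    {X H H' : Type*} [TopologicalSpace X] [CompactSpace X]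
    [NormedAddCommGroup H] [InnerProductSpace ℝ H] [CompleteSpace H]
    [NormedAddCommGroup H'] [InnerProductSpace ℝ H'] [CompleteSpace H']
    (L : X → H →L[ℝ] H') (hL : Continuous L)
    (hcoker : ∀ x, FiniteDimensional ℝ (H' ⧸ LinearMap.range (L x : H →ₗ[ℝ] H'))) :
    ∃ V : Submodule ℝ H', FiniteDimensional ℝ V ∧
      ∀ x, LinearMap.range (L x : H →ₗ[ℝ] H') ⊔ V = ⊤ := by
  choose V hVfin hV using fun x =>
    (LinearMap.range (L x : H →ₗ[ℝ] H')).exists_finiteDimensional_sup_eq_top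
  obtain ⟨t, ht⟩ := CompactSpace.elim_nhds_subcover
    (fun x₀ => {x | LinearMap.range (L x : H →ₗ[ℝ] H') ⊔ V x₀ = ⊤})
    (fun x₀ => ContinuousLinearMap.eventually_range_sup_eq_top hL.continuousAt (V x₀) (hV x₀))
  refine ⟨t.sup V, inferInstance, fun x => ?_⟩
  obtain ⟨x₀, hx₀, hx : _ ⊔ V x₀ = ⊤⟩ := Set.mem_iUnion₂.1 (ht.ge (Set.mem_univ x))
  exact top_unique (hx ▸ sup_le_sup_left (Finset.le_sup hx₀) _)

/-- For a norm-continuous family `L : X → B(H, H')` of bounded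
Fredholm operators between real separable Hilbert spaces, parameterized by a
compact topological space `X`, there is a finite-dimensional subspace `V ⊆ H'`
transverse to the whole family: `Im(L x) + V = H'` for all `x`. -/
theorem exists_finiteDimensional_transverse_subspace
    {X H H' : Type*} [TopologicalSpace X] [CompactSpace X]
    [NormedAddCommGroup H] [InnerProductSpace ℝ H] [CompleteSpace H]
    [TopologicalSpace.SeparableSpace H]
    [NormedAddCommGroup H'] [InnerProductSpace ℝ H'] [CompleteSpace H']
    [TopologicalSpace.SeparableSpace H']
    (L : X → H →L[ℝ] H') (hL : Continuous L)
    (hker : ∀ x, FiniteDimensional ℝ (LinearMap.ker (L x : H →ₗ[ℝ] H')))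
    (hran : ∀ x, IsClosed (LinearMap.range (L x : H →ₗ[ℝ] H') : Set H'))
    (hcoker : ∀ x, FiniteDimensional ℝ (H' ⧸ LinearMap.range (L x : H →ₗ[ℝ] H'))) :
    ∃ V : Submodule ℝ H', FiniteDimensional ℝ V ∧
      ∀ x, LinearMap.range (L x : H →ₗ[ℝ] H') ⊔ V = ⊤ :=
  exists_finiteDimensional_transverse_subspace_general L hL hcoker
end

section
/- Let H and H' be real Hilbert spaces, let T : H → H' be a bounded Fredholm operator, and let V be a finite-dimensional linear subspace of H' with Im(T) + V = H'. Then the preimage T⁻¹(V) is a finite-dimensional subspace of H, and dim T⁻¹(V) = dim V + ind(T), where ind(T) = dim ker T − codim Im(T) is the Fredholm index of T. -/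
/-!
Restricting `T` to `W = T⁻¹(V)` gives a map `W → V` with the same kernel as `T`, and, because
`Im(T) + V = H'`, the same cokernel: `V / (V ∩ Im T) ≅ (Im T + V) / Im T = H' / Im T`.
Hence the restriction has the index of `T`, while the index of a map between
finite-dimensional spaces is the difference of their dimensions.
-/

open Submodule

namespace Submodule

variable {R N : Type*} [Ring R] [AddCommGroup N] [Module R N]

noncomputable def quotientComapSubtypeEquivOfSupEqTop {p q : Submodule R N} (h : p ⊔ q = ⊤) :
    (q ⧸ p.comap q.subtype) ≃ₗ[R] N ⧸ p :=
  (quotEquivOfEq _ _ (by rw [LinearMap.ker_comp, ker_mkQ])).trans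
    ((p.mkQ ∘ₗ q.subtype).quotKerEquivOfSurjective <| by
      rw [← LinearMap.range_eq_top, LinearMap.range_comp, range_subtype, map_mkQ_eq_top, h])

end Submodule

namespace LinearMap

variable {R M N : Type*} [Ring R] [AddCommGroup M] [Module R M] [AddCommGroup N] [Module R N]

def comapRestrict (f : M →ₗ[R] N) (V : Submodule R N) : V.comap f →ₗ[R] V :=
  f.restrict fun _ hx ↦ hx

variable (f : M →ₗ[R] N) (V : Submodule R N)

theorem ker_comapRestrict : ker (f.comapRestrict V) = (ker f).comap (V.comap f).subtype :=
  ker_restrict _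

theorem range_comapRestrict : range (f.comapRestrict V) = (range f).comap V.subtype := by
  rw [comapRestrict, range_restrict, map_comap_eq, comap_inf, comap_subtype_self, inf_top_eq]

theorem finite_comap_of_finite_ker [IsNoetherian R V] [Module.Finite R (ker f)] :
    Module.Finite R (V.comap f) := by
  refine Module.Finite.iff_fg.mpr (fg_of_fg_map_of_fg_inf_ker f ?_ ?_)
  · rw [map_comap_eq]
    have := isNoetherian_of_le (inf_le_right : range f ⊓ V ≤ V)
    exact Module.Finite.iff_fg.mp inferInstance
  · rw [inf_eq_right.mpr (ker_le_comap f)]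
    exact Module.Finite.iff_fg.mp inferInstance

variable {f V}

theorem index_comapRestrict (h : range f ⊔ V = ⊤) : (f.comapRestrict V).index = f.index := by
  rw [index_eq_finrank_sub, index_eq_finrank_sub, ker_comapRestrict, range_comapRestrict,
    (comapSubtypeEquivOfLe (ker_le_comap f)).finrank_eq,
    (quotientComapSubtypeEquivOfSupEqTop h).finrank_eq]

end LinearMap

theorem finrank_comap_eq_finrank_add_index_general
    {H H' : Type*}
    [NormedAddCommGroup H] [InnerProductSpace ℝ H]
    [NormedAddCommGroup H'] [InnerProductSpace ℝ H']
    (T : H →L[ℝ] H')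
    (hker : FiniteDimensional ℝ (LinearMap.ker (T : H →ₗ[ℝ] H')))
    (V : Submodule ℝ H') (hV : FiniteDimensional ℝ V)
    (htrans : LinearMap.range (T : H →ₗ[ℝ] H') ⊔ V = ⊤) :
    FiniteDimensional ℝ (Submodule.comap (T : H →ₗ[ℝ] H') V) ∧
      (Module.finrank ℝ (Submodule.comap (T : H →ₗ[ℝ] H') V) : ℤ) =
        (Module.finrank ℝ V : ℤ) +
          ((Module.finrank ℝ (LinearMap.ker (T : H →ₗ[ℝ] H')) : ℤ) -
            (Module.finrank ℝ (H' ⧸ LinearMap.range (T : H →ₗ[ℝ] H')) : ℤ)) := by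
  have hW := LinearMap.finite_comap_of_finite_ker (T : H →ₗ[ℝ] H') V
  refine ⟨hW, ?_⟩
  have hindex := (LinearMap.comapRestrict (T : H →ₗ[ℝ] H') V).index_eq_of_finiteDimensional
  rw [LinearMap.index_comapRestrict htrans, LinearMap.index_eq_finrank_sub] at hindex
  lia

/-- If `T : H → H'` is a bounded Fredholm operator between real
Hilbert spaces and `V ⊆ H'` is a finite-dimensional subspace with
`Im(T) + V = H'`, then `T⁻¹(V)` is finite-dimensional and
`dim T⁻¹(V) = dim V + ind(T)`, where `ind(T) = dim ker T − codim Im(T)`. -/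
theorem finrank_comap_eq_finrank_add_index
    {H H' : Type*}
    [NormedAddCommGroup H] [InnerProductSpace ℝ H] [CompleteSpace H]
    [NormedAddCommGroup H'] [InnerProductSpace ℝ H'] [CompleteSpace H']
    (T : H →L[ℝ] H')
    (hker : FiniteDimensional ℝ (LinearMap.ker (T : H →ₗ[ℝ] H')))
    (hran : IsClosed (LinearMap.range (T : H →ₗ[ℝ] H') : Set H'))
    (hcoker : FiniteDimensional ℝ (H' ⧸ LinearMap.range (T : H →ₗ[ℝ] H')))
    (V : Submodule ℝ H') (hV : FiniteDimensional ℝ V)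
    (htrans : LinearMap.range (T : H →ₗ[ℝ] H') ⊔ V = ⊤) :
    FiniteDimensional ℝ (Submodule.comap (T : H →ₗ[ℝ] H') V) ∧
      (Module.finrank ℝ (Submodule.comap (T : H →ₗ[ℝ] H') V) : ℤ) =
        (Module.finrank ℝ V : ℤ) +
          ((Module.finrank ℝ (LinearMap.ker (T : H →ₗ[ℝ] H')) : ℤ) -
            (Module.finrank ℝ (H' ⧸ LinearMap.range (T : H →ₗ[ℝ] H')) : ℤ)) :=
  finrank_comap_eq_finrank_add_index_general T hker V hV htrans
end

section
/- Let H be a real separable Hilbert space and let L : [0,1] → B(H) be a continuously differentiable path of bounded self-adjoint Fredholm operators all of whose crossing points are regular, i.e. for every t with ker L(t) ≠ {0} the quadratic form u ↦ ⟨L'(t)u, u⟩ restricted to ker L(t) is nondegenerate. Then the set of crossing points {t ∈ [0,1] : ker L(t) ≠ {0}} is finite. -/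
/-!
Fix `t₀ ∈ [0,1]`, write `K = ker L(t₀)` and `P` for the orthogonal projection onto `K`.
Since `L(t₀)` has closed range and `K` is finite-dimensional, regularity at `t₀` makes
`u ↦ (L(t₀) u, P L'(t₀) u)` bounded below: `‖u‖ ≤ C (‖L(t₀) u‖ + ‖P L'(t₀) u‖)`.
If `L(t) u = 0` then `L(t₀) u = (L(t₀) - L(t)) u`, and the difference quotient
`(L(t) - L(t₀)) u / (t - t₀) = -L(t₀) u / (t - t₀)` lies in `range L(t₀) ⊥ K`, so
`P L'(t₀) u = P (L'(t₀) - (L(t) - L(t₀)) / (t - t₀)) u`. Both right-hand sides are bounded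
by `ε(t) ‖u‖` with `ε(t) → 0` as `t → t₀`, hence `u = 0`: no point of `[0,1]` is an
accumulation point of crossings, so by compactness there are finitely many.
-/

open scoped RealInnerProductSpace

open Filter Topology

namespace ContinuousLinearMap

variable {𝕜 E F G : Type*} [RCLike 𝕜]
  [NormedAddCommGroup E] [InnerProductSpace 𝕜 E] [CompleteSpace E]
  [NormedAddCommGroup F] [NormedSpace 𝕜 F] [CompleteSpace F]
  [NormedAddCommGroup G] [NormedSpace 𝕜 G]

theorem exists_norm_sub_starProjection_ker_le_of_isClosed_range (T : E →L[𝕜] F)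
    [(LinearMap.ker (T : E →ₗ[𝕜] F)).HasOrthogonalProjection]
    (hT : IsClosed (LinearMap.range (T : E →ₗ[𝕜] F) : Set F)) :
    ∃ c ≥ 0, ∀ u, ‖u - (LinearMap.ker (T : E →ₗ[𝕜] F)).starProjection u‖ ≤ c * ‖T u‖ := by
  have : CompleteSpace (LinearMap.range (T : E →ₗ[𝕜] F)) := hT.completeSpace_coe
  let T₀ := T.codRestrict _ (LinearMap.mem_range_self (T : E →ₗ[𝕜] F))
  have hT₀ : Function.Surjective T₀ := by
    rintro ⟨_, x, rfl⟩
    exact ⟨x, rfl⟩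
  obtain ⟨c, hc, hpre⟩ := T₀.exists_preimage_norm_le hT₀
  refine ⟨c, hc.le, fun u ↦ ?_⟩
  obtain ⟨x, hx, hxc⟩ := hpre (T₀ u)
  have hux : u - x ∈ LinearMap.ker (T : E →ₗ[𝕜] F) := by
    simpa [sub_eq_zero, T₀] using (congrArg Subtype.val hx).symm
  calc ‖u - (LinearMap.ker (T : E →ₗ[𝕜] F)).starProjection u‖
      ≤ ‖u - (u - x)‖ := by
        rw [Submodule.starProjection_minimal]
        change _ ≤ ‖u - (⟨u - x, hux⟩ : LinearMap.ker (T : E →ₗ[𝕜] F))‖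
        exact ciInf_le ⟨0, Set.forall_mem_range.2 fun _ ↦ norm_nonneg _⟩ _
    _ = ‖x‖ := by rw [sub_sub_cancel]
    _ ≤ c * ‖T u‖ := hxc

theorem exists_norm_le_mul_norm_add_norm_of_injOn_ker {T : E →L[𝕜] F} {B : E →L[𝕜] G}
    [FiniteDimensional 𝕜 (LinearMap.ker (T : E →ₗ[𝕜] F))]
    (hT : IsClosed (LinearMap.range (T : E →ₗ[𝕜] F) : Set F))
    (hB : ∀ v ∈ LinearMap.ker (T : E →ₗ[𝕜] F), B v = 0 → v = 0) :
    ∃ C ≥ 0, ∀ u, ‖u‖ ≤ C * (‖T u‖ + ‖B u‖) := by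
  set K := LinearMap.ker (T : E →ₗ[𝕜] F)
  obtain ⟨c, hc, hcT⟩ := T.exists_norm_sub_starProjection_ker_le_of_isClosed_range hT
  have hBK : LinearMap.ker ((B : E →ₗ[𝕜] G) ∘ₗ K.subtype) = ⊥ :=
    LinearMap.ker_eq_bot'.2 fun v hv ↦ Subtype.ext (hB v v.2 hv)
  obtain ⟨d, -, hd⟩ := LinearMap.exists_antilipschitzWith _ hBK
  refine ⟨d + (d * ‖B‖ + 1) * c, by positivity, fun u ↦ ?_⟩
  set w := u - K.starProjection u
  have hPu : ‖K.starProjection u‖ ≤ d * (‖B u‖ + ‖B‖ * ‖w‖) := calc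
    ‖K.starProjection u‖ ≤ d * ‖B (K.starProjection u)‖ :=
      hd.le_mul_norm (map_zero _) (K.orthogonalProjectionOnto u)
    _ = d * ‖B u - B w‖ := by simp [w]
    _ ≤ d * (‖B u‖ + ‖B‖ * ‖w‖) := by
      gcongr; exact (norm_sub_le _ _).trans (add_le_add_right (B.le_opNorm w) _)
  have hw : ‖w‖ ≤ c * ‖T u‖ := hcT u
  calc ‖u‖ = ‖K.starProjection u + w‖ := by simp [w]
    _ ≤ ‖K.starProjection u‖ + ‖w‖ := norm_add_le _ _
    _ ≤ d * ‖B u‖ + (d * ‖B‖ + 1) * (c * ‖T u‖) := by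
      nlinarith [mul_le_mul_of_nonneg_left hw (by positivity : (0 : ℝ) ≤ d * ‖B‖ + 1)]
    _ ≤ (d + (d * ‖B‖ + 1) * c) * (‖T u‖ + ‖B u‖) := by
      have : 0 ≤ d * ‖T u‖ + (d * ‖B‖ + 1) * c * ‖B u‖ := by positivity
      nlinarith

end ContinuousLinearMap

theorem IsSelfAdjoint.starProjection_ker_apply_self {𝕜 E : Type*} [RCLike 𝕜]
    [NormedAddCommGroup E] [InnerProductSpace 𝕜 E] [CompleteSpace E] {T : E →L[𝕜] E}
    (hT : IsSelfAdjoint T) [(LinearMap.ker (T : E →ₗ[𝕜] E)).HasOrthogonalProjection] (u : E) :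
    (LinearMap.ker (T : E →ₗ[𝕜] E)).starProjection (T u) = 0 := by
  rw [Submodule.starProjection_apply_eq_zero_iff, ← hT.isSymmetric.orthogonal_range]
  exact Submodule.le_orthogonal_orthogonal _ (LinearMap.mem_range_self _ u)

theorem eventually_ker_eq_bot_of_regular_crossing {H : Type*} [NormedAddCommGroup H]
    [InnerProductSpace ℝ H] [CompleteSpace H] {L : ℝ → H →L[ℝ] H} {L' : H →L[ℝ] H}
    {s : Set ℝ} {t₀ : ℝ} (hL : HasDerivWithinAt L L' s t₀) (hsa : IsSelfAdjoint (L t₀))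
    [FiniteDimensional ℝ (LinearMap.ker (L t₀ : H →ₗ[ℝ] H))]
    (hran : IsClosed (LinearMap.range (L t₀ : H →ₗ[ℝ] H) : Set H))
    (hreg : ∀ u ∈ LinearMap.ker (L t₀ : H →ₗ[ℝ] H),
      (∀ v ∈ LinearMap.ker (L t₀ : H →ₗ[ℝ] H), ⟪L' u, v⟫ = 0) → u = 0) :
    ∀ᶠ t in 𝓝[s \ {t₀}] t₀, LinearMap.ker (L t : H →ₗ[ℝ] H) = ⊥ := by
  set K := LinearMap.ker (L t₀ : H →ₗ[ℝ] H)
  obtain ⟨C, hC, hCL⟩ := ContinuousLinearMap.exists_norm_le_mul_norm_add_norm_of_injOn_ker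
    (B := K.starProjection ∘L L') hran fun v hv hPv ↦
      hreg v hv fun p hp ↦ (Submodule.mem_orthogonal' K _).1
        ((K.starProjection_apply_eq_zero_iff).1 hPv) p hp
  have hlim : Tendsto (fun t ↦ C * (‖L t₀ - L t‖ + ‖L' - slope L t₀ t‖)) (𝓝[s \ {t₀}] t₀)
      (𝓝 (C * (‖L t₀ - L t₀‖ + ‖L' - L'‖))) := by
    refine tendsto_const_nhds.mul ((tendsto_const_nhds.sub ?_).norm.add
      (tendsto_const_nhds.sub (hasDerivWithinAt_iff_tendsto_slope.1 hL)).norm)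
    exact hL.continuousWithinAt.tendsto.mono_left (nhdsWithin_mono _ Set.sdiff_subset)
  simp only [sub_self, norm_zero, add_zero, mul_zero] at hlim
  filter_upwards [hlim.eventually (gt_mem_nhds one_pos)] with t ht
  refine LinearMap.ker_eq_bot'.2 fun u hu ↦ norm_eq_zero.1 ?_
  have hu : L t u = 0 := hu
  have hL₀u : L t₀ u = (L t₀ - L t) u := by simp [hu]
  have hBu : K.starProjection (L' u) = K.starProjection ((L' - slope L t₀ t) u) := by
    simp [slope_def_module, hu, K, hsa.starProjection_ker_apply_self u]
  have : ‖u‖ ≤ C * (‖L t₀ - L t‖ + ‖L' - slope L t₀ t‖) * ‖u‖ := calc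
    ‖u‖ ≤ C * (‖L t₀ u‖ + ‖K.starProjection (L' u)‖) := hCL u
    _ ≤ C * (‖L t₀ - L t‖ * ‖u‖ + ‖L' - slope L t₀ t‖ * ‖u‖) := by
      rw [hL₀u, hBu]
      gcongr
      · exact (L t₀ - L t).le_opNorm u
      · exact (K.norm_starProjection_apply_le _).trans ((L' - slope L t₀ t).le_opNorm u)
    _ = C * (‖L t₀ - L t‖ + ‖L' - slope L t₀ t‖) * ‖u‖ := by ring
  nlinarith [norm_nonneg u]

theorem crossing_points_finite_of_regular_general
    {H : Type*} [NormedAddCommGroup H] [InnerProductSpace ℝ H]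
    [CompleteSpace H]
    (L L' : ℝ → H →L[ℝ] H)
    (hderiv : ∀ t ∈ Set.Icc (0 : ℝ) 1, HasDerivWithinAt L (L' t) (Set.Icc 0 1) t)
    (hsa : ∀ t ∈ Set.Icc (0 : ℝ) 1, IsSelfAdjoint (L t))
    (hker : ∀ t ∈ Set.Icc (0 : ℝ) 1, FiniteDimensional ℝ (LinearMap.ker (L t : H →ₗ[ℝ] H)))
    (hran : ∀ t ∈ Set.Icc (0 : ℝ) 1, IsClosed (LinearMap.range (L t : H →ₗ[ℝ] H) : Set H))
    (hreg : ∀ t ∈ Set.Icc (0 : ℝ) 1, ∀ u ∈ LinearMap.ker (L t : H →ₗ[ℝ] H),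
      (∀ v ∈ LinearMap.ker (L t : H →ₗ[ℝ] H), ⟪L' t u, v⟫ = 0) → u = 0) :
    {t ∈ Set.Icc (0 : ℝ) 1 | LinearMap.ker (L t : H →ₗ[ℝ] H) ≠ ⊥}.Finite := by
  refine isCompact_Icc.finite_sdiff_of_mem_codiscreteWithin
    (s := {t | LinearMap.ker (L t : H →ₗ[ℝ] H) = ⊥}) ?_
  refine mem_iSup.2 fun t ↦ mem_iSup.2 fun ht ↦ ?_
  have := hker t ht
  exact eventually_ker_eq_bot_of_regular_crossing (hderiv t ht) (hsa t ht) (hran t ht) (hreg t ht)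

/-- Let `L : [0,1] → B(H)` be a `C¹` path (with derivative `L'`)
of bounded self-adjoint Fredholm operators on a real separable Hilbert space,
all of whose crossing points are regular: whenever `ker L(t) ≠ 0`, the quadratic
form `u ↦ ⟨L'(t)u, u⟩` restricted to `ker L(t)` is nondegenerate. Then the set
of crossing points `{t ∈ [0,1] : ker L(t) ≠ 0}` is finite. -/
theorem crossing_points_finite_of_regular
    {H : Type*} [NormedAddCommGroup H] [InnerProductSpace ℝ H]
    [CompleteSpace H] [TopologicalSpace.SeparableSpace H]
    (L L' : ℝ → H →L[ℝ] H)
    (hderiv : ∀ t ∈ Set.Icc (0 : ℝ) 1, HasDerivWithinAt L (L' t) (Set.Icc 0 1) t)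
    (hcont : ContinuousOn L' (Set.Icc 0 1))
    (hsa : ∀ t ∈ Set.Icc (0 : ℝ) 1, IsSelfAdjoint (L t))
    (hker : ∀ t ∈ Set.Icc (0 : ℝ) 1, FiniteDimensional ℝ (LinearMap.ker (L t : H →ₗ[ℝ] H)))
    (hran : ∀ t ∈ Set.Icc (0 : ℝ) 1, IsClosed (LinearMap.range (L t : H →ₗ[ℝ] H) : Set H))
    (hcoker : ∀ t ∈ Set.Icc (0 : ℝ) 1,
      FiniteDimensional ℝ (H ⧸ LinearMap.range (L t : H →ₗ[ℝ] H)))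
    (hreg : ∀ t ∈ Set.Icc (0 : ℝ) 1, ∀ u ∈ LinearMap.ker (L t : H →ₗ[ℝ] H),
      (∀ v ∈ LinearMap.ker (L t : H →ₗ[ℝ] H), ⟪L' t u, v⟫ = 0) → u = 0) :
    {t ∈ Set.Icc (0 : ℝ) 1 | LinearMap.ker (L t : H →ₗ[ℝ] H) ≠ ⊥}.Finite :=
  crossing_points_finite_of_regular_general L L' hderiv hsa hker hran hreg
end
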